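/- arXiv:1003.2316 — 5 statements merged into one kernel-verified Lean document; each statement's English description precedes it below -/
import Mathlib

section
/- Let u : ℝ^d → ℝ be K-semi-concave with enlarged pseudograph E(u). Then every vector (δq, δp) in the paratingent (Bouligand) cone to E(u) at a point (q, p) ∈ E(u) satisfies ⟪δp, δq⟫ ≤ 2K‖δq‖². -/
/-!
Adding the superdifferential inequality at `x` tested at `y` to the one at `y` tested at `x`
cancels the values of `u` and leaves `⟪p - p', x - y⟫ ≤ 2K‖x - y‖²` for any two points
`(x, p), (y, p')` of `E(u)`. This inequality cuts out a closed set of `(δq, δp)` that is stable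
under scaling, so it survives the rescaling and the limit defining paratingent vectors.
-/

open scoped RealInnerProductSpace
open Filter

def SuperDiff {d : ℕ} (K : ℝ) (u : EuclideanSpace ℝ (Fin d) → ℝ)
    (x p : EuclideanSpace ℝ (Fin d)) : Prop :=
  ∀ y, u y ≤ u x + ⟪p, y - x⟫ + K * ‖y - x‖ ^ 2

/-- The paratingent (Bouligand) cone to `E` at `z`. -/
def Paratingent {V : Type*} [NormedAddCommGroup V] [NormedSpace ℝ V]
    (E : Set V) (z : V) : Set V :=
  {w | ∃ t : ℕ → ℝ, ∃ a b : ℕ → V,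
    (∀ n, 0 < t n) ∧ (∀ n, a n ∈ E) ∧ (∀ n, b n ∈ E) ∧
    Tendsto a atTop (nhds z) ∧ Tendsto b atTop (nhds z) ∧
    Tendsto (fun n => (t n)⁻¹ • (a n - b n)) atTop (nhds w)}

theorem paratingent_subset_of_sub_mem {V : Type*} [NormedAddCommGroup V] [NormedSpace ℝ V]
    {E C : Set V} (z : V) (hC : IsClosed C) (hsmul : ∀ c : ℝ, 0 < c → ∀ w ∈ C, c • w ∈ C)
    (hsub : ∀ a ∈ E, ∀ b ∈ E, a - b ∈ C) : Paratingent E z ⊆ C := by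
  rintro w ⟨t, a, b, ht, ha, hb, -, -, hlim⟩
  exact hC.mem_of_tendsto hlim
    (Eventually.of_forall fun n => hsmul _ (inv_pos.2 (ht n)) _ (hsub _ (ha n) _ (hb n)))

section OneSidedLipschitzCone

variable {F : Type*} [NormedAddCommGroup F] [InnerProductSpace ℝ F]

def oneSidedLipschitzCone (F : Type*) [NormedAddCommGroup F] [InnerProductSpace ℝ F] (L : ℝ) :
    Set (F × F) :=
  {w | ⟪w.2, w.1⟫ ≤ L * ‖w.1‖ ^ 2}

theorem isClosed_oneSidedLipschitzCone (L : ℝ) : IsClosed (oneSidedLipschitzCone F L) :=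
  isClosed_le (by fun_prop) (by fun_prop)

theorem smul_mem_oneSidedLipschitzCone {L c : ℝ} {w : F × F}
    (hw : w ∈ oneSidedLipschitzCone F L) : c • w ∈ oneSidedLipschitzCone F L := by
  have hscale : ⟪c • w.2, c • w.1⟫ = c ^ 2 * ⟪w.2, w.1⟫ := by
    rw [real_inner_smul_left, real_inner_smul_right]; ring
  change ⟪c • w.2, c • w.1⟫ ≤ L * ‖c • w.1‖ ^ 2
  rw [hscale, norm_smul, mul_pow, Real.norm_eq_abs, sq_abs]
  nlinarith [mul_le_mul_of_nonneg_left hw (sq_nonneg c)]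

end OneSidedLipschitzCone

theorem SuperDiff.inner_sub_le {d : ℕ} {K : ℝ} {u : EuclideanSpace ℝ (Fin d) → ℝ}
    {x y p q : EuclideanSpace ℝ (Fin d)} (hx : SuperDiff K u x p) (hy : SuperDiff K u y q) :
    ⟪p - q, x - y⟫ ≤ 2 * K * ‖x - y‖ ^ 2 := by
  have hxy := hx y
  have hyx := hy x
  rw [norm_sub_rev] at hxy
  have hflip : ⟪p, y - x⟫ = -⟪p, x - y⟫ := by rw [← inner_neg_right, neg_sub]
  rw [inner_sub_left]
  linarith

theorem stmt4_general {d : ℕ} (K : ℝ) (u : EuclideanSpace ℝ (Fin d) → ℝ)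
    (q p : EuclideanSpace ℝ (Fin d))
    (δq δp : EuclideanSpace ℝ (Fin d))
    (hmem : (δq, δp) ∈ Paratingent
      {z : EuclideanSpace ℝ (Fin d) × EuclideanSpace ℝ (Fin d) | SuperDiff K u z.1 z.2}
      (q, p)) :
    ⟪δp, δq⟫ ≤ 2 * K * ‖δq‖ ^ 2 :=
  paratingent_subset_of_sub_mem (q, p) (isClosed_oneSidedLipschitzCone (2 * K))
    (fun _ _ _ hw => smul_mem_oneSidedLipschitzCone hw)
    (fun _ ha _ hb => SuperDiff.inner_sub_le (u := u) ha hb) hmem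

/-- every `(δq, δp)` in the paratingent cone to `E(u)` at `(q,p) ∈ E(u)`
satisfies `⟪δp, δq⟫ ≤ 2K‖δq‖²`. -/
theorem stmt4 {d : ℕ} (K : ℝ) (hK : 0 ≤ K) (u : EuclideanSpace ℝ (Fin d) → ℝ)
    (hsc : ∀ x, ∃ p, SuperDiff K u x p)
    (q p : EuclideanSpace ℝ (Fin d))
    (hqp : SuperDiff K u q p)
    (δq δp : EuclideanSpace ℝ (Fin d))
    (hmem : (δq, δp) ∈ Paratingent
      {z : EuclideanSpace ℝ (Fin d) × EuclideanSpace ℝ (Fin d) | SuperDiff K u z.1 z.2}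
      (q, p)) :
    ⟪δp, δq⟫ ≤ 2 * K * ‖δq‖ ^ 2 :=
  stmt4_general K u q p δq δp hmem
end

section
/- Let F : ℝ^d → ℝ^d be a continuous map whose graph G = {(q, F(q))} has the property that its paratingent cone at every point contains no nonzero vertical vector (i.e., no vector of the form (0, v) with v ≠ 0), and suppose G is compact (F is defined on a compact set). Then F is Lipschitz. -/
open Filter

/-! If `F` were not Lipschitz, there would be `p n, q n ∈ A` with
`n * ‖p n - q n‖ < ‖F p n - F q n‖`. Since `F` is bounded, `p n - q n → 0`, so along a
subsequence both converge to some `z ∈ A`. Dividing the graph chords by `‖F p n - F q n‖`, the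
horizontal part tends to `0` while the vertical part stays on the unit sphere; a limit point of
the latter is a unit vertical vector in the paratingent cone of the graph at `(z, F z)`. -/

open scoped Topology NNReal

theorem exists_nat_mul_norm_sub_lt_of_forall_not_lipschitzOnWith {E F : Type*}
    [SeminormedAddCommGroup E] [SeminormedAddCommGroup F] {f : E → F} {s : Set E}
    (h : ¬∃ L : ℝ≥0, LipschitzOnWith L f s) (n : ℕ) :
    ∃ x ∈ s, ∃ y ∈ s, n * ‖x - y‖ < ‖f x - f y‖ := by
  simpa [lipschitzOnWith_iff_norm_sub_le] using not_exists.1 h n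

theorem tendsto_div_of_forall_nat_mul_lt {x y : ℕ → ℝ} (hx : ∀ n, 0 ≤ x n)
    (hxy : ∀ n, n * x n < y n) : Tendsto (fun n => x n / y n) atTop (𝓝 0) := by
  have hy : ∀ n, 0 < y n := fun n => (mul_nonneg n.cast_nonneg (hx n)).trans_lt (hxy n)
  refine squeeze_zero' (.of_forall fun n => div_nonneg (hx n) (hy n).le) ?_
    tendsto_one_div_atTop_nhds_zero_nat
  filter_upwards [eventually_gt_atTop 0] with n hn
  rw [div_le_div_iff₀ (hy n) (by exact_mod_cast hn)]
  linarith [hxy n]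

theorem tendsto_of_forall_nat_mul_lt_of_le {x y : ℕ → ℝ} {C : ℝ} (hx : ∀ n, 0 ≤ x n)
    (hxy : ∀ n, n * x n < y n) (hyC : ∀ n, y n ≤ C) : Tendsto x atTop (𝓝 0) := by
  refine squeeze_zero' (.of_forall hx) ?_ (tendsto_const_div_atTop_nhds_zero_nat C)
  filter_upwards [eventually_gt_atTop 0] with n hn
  rw [le_div_iff₀ (by exact_mod_cast hn), mul_comm]
  exact (hxy n).le.trans (hyC n)

theorem exists_norm_eq_one_mem_paratingent {V W : Type*} [NormedAddCommGroup V]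
    [NormedSpace ℝ V] [NormedAddCommGroup W] [NormedSpace ℝ W] [ProperSpace W]
    {E : Set (V × W)} {z : V × W} {a b : ℕ → V × W} (ha : ∀ n, a n ∈ E) (hb : ∀ n, b n ∈ E)
    (haz : Tendsto a atTop (𝓝 z)) (hbz : Tendsto b atTop (𝓝 z))
    (hpos : ∀ n, 0 < ‖(a n).2 - (b n).2‖)
    (hratio : Tendsto (fun n => ‖(a n).1 - (b n).1‖ / ‖(a n).2 - (b n).2‖) atTop (𝓝 0)) :
    ∃ v : W, ‖v‖ = 1 ∧ ((0 : V), v) ∈ Paratingent E z := by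
  set t := fun n => ‖(a n).2 - (b n).2‖
  have hsphere : ∀ n, (t n)⁻¹ • ((a n).2 - (b n).2) ∈ Metric.sphere (0 : W) 1 := fun n => by
    simp [t, norm_smul, (hpos n).ne']
  obtain ⟨v, hv, ψ, hψ, hvlim⟩ := (isCompact_sphere (0 : W) 1).tendsto_subseq hsphere
  have hfst : Tendsto (fun n => (t n)⁻¹ • ((a n).1 - (b n).1)) atTop (𝓝 0) := by
    rw [tendsto_zero_iff_norm_tendsto_zero]
    simpa [t, norm_smul, div_eq_inv_mul] using hratio
  refine ⟨v, mem_sphere_zero_iff_norm.1 hv, t ∘ ψ, a ∘ ψ, b ∘ ψ, fun n => hpos _,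
    fun n => ha _, fun n => hb _, haz.comp hψ.tendsto_atTop, hbz.comp hψ.tendsto_atTop, ?_⟩
  exact (hfst.comp hψ.tendsto_atTop).prodMk_nhds hvlim

/-- a continuous map on a compact set whose graph has no nonzero vertical vector
in any of its paratingent cones is Lipschitz. -/
theorem stmt5 {d : ℕ} (A : Set (EuclideanSpace ℝ (Fin d))) (hA : IsCompact A)
    (F : EuclideanSpace ℝ (Fin d) → EuclideanSpace ℝ (Fin d)) (hF : ContinuousOn F A)
    (hvert : ∀ z ∈ (fun q => (q, F q)) '' A,
      ∀ v : EuclideanSpace ℝ (Fin d),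
        ((0 : EuclideanSpace ℝ (Fin d)), v) ∈ Paratingent ((fun q => (q, F q)) '' A) z →
        v = 0) :
    ∃ L : NNReal, LipschitzOnWith L F A := by
  by_contra hnot
  choose p hp q hq hlt using exists_nat_mul_norm_sub_lt_of_forall_not_lipschitzOnWith hnot
  obtain ⟨C, hC⟩ := hA.exists_bound_of_continuousOn hF
  have hdist : Tendsto (fun n => p n - q n) atTop (𝓝 0) :=
    tendsto_zero_iff_norm_tendsto_zero.2 <| tendsto_of_forall_nat_mul_lt_of_le
      (fun n => norm_nonneg _) hlt fun n =>
        (norm_sub_le _ _).trans (add_le_add (hC _ (hp n)) (hC _ (hq n)))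
  have hpos : ∀ n, 0 < ‖F (p n) - F (q n)‖ := fun n =>
    (mul_nonneg n.cast_nonneg (norm_nonneg _)).trans_lt (hlt n)
  obtain ⟨z, hz, φ, hφ, hpz⟩ := hA.tendsto_subseq hp
  have hqz : Tendsto (fun n => q (φ n)) atTop (𝓝 z) := by
    simpa using hpz.sub (hdist.comp hφ.tendsto_atTop)
  have hgraph : ∀ x : ℕ → _, (∀ n, x n ∈ A) → Tendsto x atTop (𝓝 z) →
      Tendsto (fun n => (x n, F (x n))) atTop (𝓝 (z, F z)) := fun x hx hxz =>
    hxz.prodMk_nhds ((hF z hz).tendsto.comp (tendsto_nhdsWithin_iff.2 ⟨hxz, .of_forall hx⟩))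
  obtain ⟨v, hv, hmem⟩ := exists_norm_eq_one_mem_paratingent
    (E := (fun x => (x, F x)) '' A)
    (a := fun n => (p (φ n), F (p (φ n)))) (b := fun n => (q (φ n), F (q (φ n))))
    (fun n => ⟨p (φ n), hp _, rfl⟩) (fun n => ⟨q (φ n), hq _, rfl⟩)
    (hgraph _ (fun n => hp _) hpz) (hgraph _ (fun n => hq _) hqz)
    (fun n => hpos (φ n))
    ((tendsto_div_of_forall_nat_mul_lt (fun n => norm_nonneg _) hlt).comp hφ.tendsto_atTop)
  exact one_ne_zero (hv.symm.trans (norm_eq_zero.2 (hvert _ ⟨z, hz, rfl⟩ v hmem)))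
end

section
/- Let u : ℝ^d → ℝ be K-semi-concave, and let η = (η₁, η₂) : [a,b] → ℝ^d × ℝ^d be a Lipschitz curve with η₂(τ) a K-super-differential of u at η₁(τ) for every τ. Then for almost every τ ∈ [a,b], the derivative of u ∘ η₁ at τ exists and equals ⟪η₂(τ), η₁'(τ)⟫. -/
/-
Testing the super-differential inequality at `η₁ σ` and at `η₁ τ` against each other pins the
remainder `u (η₁ σ) - u (η₁ τ) - ⟪η₂ τ, η₁ σ - η₁ τ⟫` between `±(|K| ‖Δη₁‖² + ‖Δη₂‖ ‖Δη₁‖)`,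
which is `O((σ - τ)²)` because `η` is Lipschitz. So wherever `η₁` is differentiable (almost
everywhere, by Rademacher's theorem on the line) the chain rule holds with the linear map
`⟪η₂ τ, ·⟫` in place of the derivative of `u`.
-/

open scoped RealInnerProductSpace
open MeasureTheory

open Asymptotics Filter Topology

theorem SuperDiff.abs_sub_sub_inner_le {d : ℕ} {K : ℝ} {u : EuclideanSpace ℝ (Fin d) → ℝ}
    {x y p q : EuclideanSpace ℝ (Fin d)} (hx : SuperDiff K u x p) (hy : SuperDiff K u y q) :
    |u y - u x - ⟪p, y - x⟫| ≤ |K| * ‖y - x‖ ^ 2 + ‖q - p‖ * ‖y - x‖ := by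
  have upper := hx y
  have lower := hy x
  have hsplit : ⟪q, x - y⟫ = -⟪q - p, y - x⟫ - ⟪p, y - x⟫ := by
    rw [← neg_sub y x, inner_neg_right, inner_sub_left]
    ring
  rw [hsplit, norm_sub_rev] at lower
  have hcs := abs_real_inner_le_norm (q - p) (y - x)
  have hsq : 0 ≤ ‖y - x‖ ^ 2 := by positivity
  have hK := mul_le_mul_of_nonneg_right (le_abs_self K) hsq
  rw [abs_le] at hcs ⊢
  constructor <;> linarith

theorem SuperDiff.isBigO_remainder_of_lipschitzOnWith {d : ℕ} {K : ℝ}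
    {u : EuclideanSpace ℝ (Fin d) → ℝ} {η₁ η₂ : ℝ → EuclideanSpace ℝ (Fin d)} {L : NNReal}
    {s : Set ℝ} (hη₁ : LipschitzOnWith L η₁ s) (hη₂ : LipschitzOnWith L η₂ s)
    (hsd : ∀ τ ∈ s, SuperDiff K u (η₁ τ) (η₂ τ)) {τ : ℝ} (hτ : τ ∈ s) :
    (fun σ => u (η₁ σ) - u (η₁ τ) - ⟪η₂ τ, η₁ σ - η₁ τ⟫) =O[𝓝[s] τ] fun σ => ‖σ - τ‖ ^ 2 := by
  refine IsBigO.of_bound ((|K| + 1) * (L : ℝ) ^ 2) ?_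
  filter_upwards [self_mem_nhdsWithin] with σ hσ
  have hbound := (hsd τ hτ).abs_sub_sub_inner_le (hsd σ hσ)
  have h₁ : ‖η₁ σ - η₁ τ‖ ≤ L * ‖σ - τ‖ := by
    simpa only [dist_eq_norm] using hη₁.dist_le_mul σ hσ τ hτ
  have h₂ : ‖η₂ σ - η₂ τ‖ ≤ L * ‖σ - τ‖ := by
    simpa only [dist_eq_norm] using hη₂.dist_le_mul σ hσ τ hτ
  have h₁sq : ‖η₁ σ - η₁ τ‖ ^ 2 ≤ (L * ‖σ - τ‖) ^ 2 := by gcongr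
  have h₂₁ : ‖η₂ σ - η₂ τ‖ * ‖η₁ σ - η₁ τ‖ ≤ (L * ‖σ - τ‖) ^ 2 := by
    rw [sq]; gcongr
  rw [Real.norm_eq_abs, norm_pow, norm_norm]
  calc _ ≤ |K| * ‖η₁ σ - η₁ τ‖ ^ 2 + ‖η₂ σ - η₂ τ‖ * ‖η₁ σ - η₁ τ‖ := hbound
    _ ≤ |K| * (L * ‖σ - τ‖) ^ 2 + (L * ‖σ - τ‖) ^ 2 := by gcongr
    _ = _ := by ring

theorem HasDerivWithinAt.comp_of_isLittleO_sub_inner {E : Type*} [NormedAddCommGroup E]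
    [InnerProductSpace ℝ E] {γ : ℝ → E} {g : E → ℝ} {p v : E} {s : Set ℝ} {τ : ℝ}
    (hγ : HasDerivWithinAt γ v s τ)
    (hg : (fun σ => g (γ σ) - g (γ τ) - ⟪p, γ σ - γ τ⟫) =o[𝓝[s] τ] fun σ => σ - τ) :
    HasDerivWithinAt (fun σ => g (γ σ)) ⟪p, v⟫ s τ := by
  have hlin : HasDerivWithinAt (fun σ => ⟪p, γ σ⟫) ⟪p, v⟫ s τ :=
    (innerSL ℝ p).hasFDerivAt.comp_hasDerivWithinAt τ hγ
  rw [hasDerivWithinAt_iff_isLittleO] at hlin ⊢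
  refine (hg.add hlin).congr_left fun σ => ?_
  rw [inner_sub_right]
  ring

theorem stmt7_general {d : ℕ} (K : ℝ) (u : EuclideanSpace ℝ (Fin d) → ℝ)
    (a b : ℝ)
    (η₁ η₂ : ℝ → EuclideanSpace ℝ (Fin d)) (L : NNReal)
    (hη₁ : LipschitzOnWith L η₁ (Set.Icc a b)) (hη₂ : LipschitzOnWith L η₂ (Set.Icc a b))
    (hsd : ∀ τ ∈ Set.Icc a b, SuperDiff K u (η₁ τ) (η₂ τ)) :
    ∀ᵐ τ ∂(volume.restrict (Set.Icc a b)),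
      HasDerivWithinAt (fun σ => u (η₁ σ))
        ⟪η₂ τ, derivWithin η₁ (Set.Icc a b) τ⟫ (Set.Icc a b) τ := by
  filter_upwards [hη₁.ae_differentiableWithinAt_real measurableSet_Icc,
    ae_restrict_mem measurableSet_Icc] with τ hdiff hτ
  refine hdiff.hasDerivWithinAt.comp_of_isLittleO_sub_inner ?_
  exact (SuperDiff.isBigO_remainder_of_lipschitzOnWith hη₁ hη₂ hsd hτ).trans_isLittleO
    ((isLittleO_pow_sub_sub τ one_lt_two).mono nhdsWithin_le_nhds)

/-- if `η = (η₁, η₂)` is a Lipschitz curve on `[a,b]` with `η₂(τ)` a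
`K`-super-differential of `u` at `η₁(τ)`, then a.e. `τ`, `(u ∘ η₁)'(τ) = ⟪η₂(τ), η₁'(τ)⟫`. -/
theorem stmt7 {d : ℕ} (K : ℝ) (hK : 0 ≤ K) (u : EuclideanSpace ℝ (Fin d) → ℝ)
    (hsc : ∀ x, ∃ p, SuperDiff K u x p)
    (a b : ℝ) (hab : a ≤ b)
    (η₁ η₂ : ℝ → EuclideanSpace ℝ (Fin d)) (L : NNReal)
    (hη₁ : LipschitzOnWith L η₁ (Set.Icc a b)) (hη₂ : LipschitzOnWith L η₂ (Set.Icc a b))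
    (hsd : ∀ τ ∈ Set.Icc a b, SuperDiff K u (η₁ τ) (η₂ τ)) :
    ∀ᵐ τ ∂(volume.restrict (Set.Icc a b)),
      HasDerivWithinAt (fun σ => u (η₁ σ))
        ⟪η₂ τ, derivWithin η₁ (Set.Icc a b) τ⟫ (Set.Icc a b) τ :=
  stmt7_general K u a b η₁ η₂ L hη₁ hη₂ hsd
end

section
/- Let u : ℝ^d → ℝ be K-semi-concave and let η = (η₁, η₂) : [a,b] → ℝ^d × ℝ^d be a closed Lipschitz curve (η(a) = η(b)) drawn on the enlarged pseudograph E(u). Then ∫ₐᵇ ⟪η₂(τ), η₁'(τ)⟫ dτ = 0; i.e., the Liouville form integrates to zero over any closed Lipschitz loop on E(u). -/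
/-!
Along the loop, `g = u ∘ η₁` satisfies the two-sided estimate
`|g σ - g τ - ⟪η₂ τ, η₁ σ - η₁ τ⟫| = O((σ - τ)²)`: the upper bound is the superdifferential
inequality at `η₁ τ`, the lower one comes from the inequality at `η₁ σ` and the Lipschitz bound
on `η₂`. Hence `g` is Lipschitz and `g' = ⟪η₂, η₁'⟫` wherever `η₁` is differentiable, i.e.
almost everywhere, so the integral is `g b - g a = 0` by the fundamental theorem of calculus
for absolutely continuous functions.
-/

open scoped RealInnerProductSpace

open scoped NNReal
open MeasureTheory Set Asymptotics Topology

lemma HasDerivWithinAt.of_abs_sub_sub_le_sq {f g : ℝ → ℝ} {g' C t : ℝ} {s : Set ℝ}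
    (hg : HasDerivWithinAt g g' s t) (ht : t ∈ s)
    (h : ∀ x ∈ s, |f x - f t - (g x - g t)| ≤ C * (x - t) ^ 2) :
    HasDerivWithinAt f g' s t := by
  have hbigO : (fun x => f x - g x - (f t - g t)) =O[𝓝[s] t] fun x => ‖x - t‖ ^ 2 :=
    IsBigO.of_bound C <| eventually_nhdsWithin_of_forall fun x hx => by
      simpa [Real.norm_eq_abs, sub_sub_sub_comm] using h x hx
  have hzero : HasDerivWithinAt (fun x => f x - g x - (f t - g t)) 0 s t := by
    simpa using (hbigO.hasFDerivWithinAt ht one_lt_two).hasDerivWithinAt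
  have hsum := (hzero.fun_add hg).add_const (f t - g t)
  rw [zero_add] at hsum
  exact hsum.congr (fun x _ => by ring) (by ring)

namespace SuperDiff

variable {d : ℕ} {K : ℝ} {u : EuclideanSpace ℝ (Fin d) → ℝ}

lemma abs_sub_sub_inner_le_s8 {x y p q : EuclideanSpace ℝ (Fin d)}
    (hx : SuperDiff K u x p) (hy : SuperDiff K u y q) :
    |u y - u x - ⟪p, y - x⟫| ≤ ‖q - p‖ * ‖y - x‖ + |K| * ‖y - x‖ ^ 2 := by
  have hupper := hx y
  have hlower := hy x
  have hswap : ⟪q, x - y⟫ = -⟪p, y - x⟫ - ⟪q - p, y - x⟫ := by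
    rw [← neg_sub y x, inner_neg_right, inner_sub_left]
    ring
  rw [hswap, norm_sub_rev x y] at hlower
  have hcs : -(‖q - p‖ * ‖y - x‖) ≤ ⟪q - p, y - x⟫ :=
    neg_le_of_abs_le (abs_real_inner_le_norm _ _)
  have hK : |K * ‖y - x‖ ^ 2| ≤ |K| * ‖y - x‖ ^ 2 := by rw [abs_mul, abs_sq]
  obtain ⟨hK_lower, hK_upper⟩ := abs_le.mp hK
  have hnn : 0 ≤ ‖q - p‖ * ‖y - x‖ := by positivity
  rw [abs_le]
  constructor <;> linarith

end SuperDiff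

section CurveOnPseudograph

variable {d : ℕ} {K : ℝ} {u : EuclideanSpace ℝ (Fin d) → ℝ} {s : Set ℝ}
  {η₁ η₂ : ℝ → EuclideanSpace ℝ (Fin d)} {L₁ L₂ : ℝ≥0}

lemma abs_comp_sub_sub_inner_le_sq (hη₁ : LipschitzOnWith L₁ η₁ s)
    (hη₂ : LipschitzOnWith L₂ η₂ s) (hon : ∀ τ ∈ s, SuperDiff K u (η₁ τ) (η₂ τ))
    {σ τ : ℝ} (hσ : σ ∈ s) (hτ : τ ∈ s) :
    |u (η₁ σ) - u (η₁ τ) - ⟪η₂ τ, η₁ σ - η₁ τ⟫| ≤ (L₁ * L₂ + |K| * L₁ ^ 2) * (σ - τ) ^ 2 := by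
  have h₁ : ‖η₁ σ - η₁ τ‖ ≤ L₁ * |σ - τ| := by
    simpa only [Real.norm_eq_abs] using hη₁.norm_sub_le hσ hτ
  have h₂ : ‖η₂ σ - η₂ τ‖ ≤ L₂ * |σ - τ| := by
    simpa only [Real.norm_eq_abs] using hη₂.norm_sub_le hσ hτ
  calc |u (η₁ σ) - u (η₁ τ) - ⟪η₂ τ, η₁ σ - η₁ τ⟫|
      ≤ ‖η₂ σ - η₂ τ‖ * ‖η₁ σ - η₁ τ‖ + |K| * ‖η₁ σ - η₁ τ‖ ^ 2 :=
        (hon τ hτ).abs_sub_sub_inner_le_s8 (hon σ hσ)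
    _ ≤ (L₂ * |σ - τ|) * (L₁ * |σ - τ|) + |K| * (L₁ * |σ - τ|) ^ 2 := by gcongr
    _ = (L₁ * L₂ + |K| * L₁ ^ 2) * (σ - τ) ^ 2 := by rw [← sq_abs (σ - τ)]; ring

lemma hasDerivWithinAt_comp_of_superDiff (hη₁ : LipschitzOnWith L₁ η₁ s)
    (hη₂ : LipschitzOnWith L₂ η₂ s) (hon : ∀ τ ∈ s, SuperDiff K u (η₁ τ) (η₂ τ))
    {τ : ℝ} {v : EuclideanSpace ℝ (Fin d)} (hτ : τ ∈ s) (hv : HasDerivWithinAt η₁ v s τ) :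
    HasDerivWithinAt (fun σ => u (η₁ σ)) ⟪η₂ τ, v⟫ s τ := by
  have hlin : HasDerivWithinAt (fun σ => ⟪η₂ τ, η₁ σ⟫) ⟪η₂ τ, v⟫ s τ := by
    simpa using (hasDerivWithinAt_const τ s (η₂ τ)).inner ℝ hv
  refine hlin.of_abs_sub_sub_le_sq (C := L₁ * L₂ + |K| * L₁ ^ 2) hτ fun σ hσ => ?_
  rw [← inner_sub_right]
  exact abs_comp_sub_sub_inner_le_sq hη₁ hη₂ hon hσ hτ

lemma lipschitzOnWith_comp_of_superDiff (hs : IsCompact s) (hη₁ : LipschitzOnWith L₁ η₁ s)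
    (hη₂ : LipschitzOnWith L₂ η₂ s) (hon : ∀ τ ∈ s, SuperDiff K u (η₁ τ) (η₂ τ)) :
    ∃ M, LipschitzOnWith M (fun σ => u (η₁ σ)) s := by
  obtain ⟨R, hR⟩ := hs.exists_bound_of_continuousOn hη₂.continuousOn
  set C : ℝ := L₁ * L₂ + |K| * L₁ ^ 2
  refine ⟨_, LipschitzOnWith.of_dist_le' (K := R * L₁ + C * Metric.diam s) fun σ hσ τ hτ => ?_⟩
  have hdiam : |σ - τ| ≤ Metric.diam s := by
    simpa only [Real.dist_eq] using Metric.dist_le_diam_of_mem hs.isBounded hσ hτ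
  have hinner : |⟪η₂ τ, η₁ σ - η₁ τ⟫| ≤ R * (L₁ * |σ - τ|) := by
    calc |⟪η₂ τ, η₁ σ - η₁ τ⟫| ≤ ‖η₂ τ‖ * ‖η₁ σ - η₁ τ‖ := abs_real_inner_le_norm _ _
      _ ≤ R * (L₁ * |σ - τ|) := by
        gcongr
        · exact (norm_nonneg _).trans (hR τ hτ)
        · exact hR τ hτ
        · simpa only [Real.norm_eq_abs] using hη₁.norm_sub_le hσ hτ
  have hsq : C * (σ - τ) ^ 2 ≤ C * Metric.diam s * |σ - τ| := by
    rw [← sq_abs, sq, ← mul_assoc]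
    gcongr
  have hquad := abs_comp_sub_sub_inner_le_sq hη₁ hη₂ hon hσ hτ
  rw [Real.dist_eq, Real.dist_eq]
  have htri := abs_sub_abs_le_abs_sub (u (η₁ σ) - u (η₁ τ)) ⟪η₂ τ, η₁ σ - η₁ τ⟫
  linarith

end CurveOnPseudograph

theorem stmt8_general {d : ℕ} (K : ℝ) (u : EuclideanSpace ℝ (Fin d) → ℝ)
    (a b : ℝ) (hab : a ≤ b)
    (η₁ η₂ : ℝ → EuclideanSpace ℝ (Fin d)) (L : NNReal)
    (hη₁ : LipschitzOnWith L η₁ (Set.Icc a b)) (hη₂ : LipschitzOnWith L η₂ (Set.Icc a b))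
    (hclosed₁ : η₁ a = η₁ b)
    (hon : ∀ τ ∈ Set.Icc a b, SuperDiff K u (η₁ τ) (η₂ τ)) :
    ∫ τ in a..b, ⟪η₂ τ, derivWithin η₁ (Set.Icc a b) τ⟫ = 0 := by
  obtain ⟨M, hlip⟩ := lipschitzOnWith_comp_of_superDiff isCompact_Icc hη₁ hη₂ hon
  have hderiv : ∀ᵐ τ, τ ∈ uIoc a b →
      ⟪η₂ τ, derivWithin η₁ (Icc a b) τ⟫ = deriv (fun σ => u (η₁ σ)) τ := by
    filter_upwards [hη₁.ae_differentiableWithinAt_of_mem_real, volume.ae_ne b]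
      with τ hdiff hτb hτ
    rw [uIoc_of_le hab] at hτ
    have hτ' : τ ∈ Ioo a b := ⟨hτ.1, lt_of_le_of_ne hτ.2 hτb⟩
    have hτIcc := Ioo_subset_Icc_self hτ'
    exact ((hasDerivWithinAt_comp_of_superDiff hη₁ hη₂ hon hτIcc
      (hdiff hτIcc).hasDerivWithinAt).hasDerivAt (Icc_mem_nhds hτ'.1 hτ'.2)).deriv.symm
  rw [← uIcc_of_le hab] at hlip
  rw [intervalIntegral.integral_congr_ae hderiv,
    hlip.absolutelyContinuousOnInterval.integral_deriv_eq_sub, hclosed₁, sub_self]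

/-- the Liouville form integrates to zero over any closed Lipschitz loop drawn
on the enlarged pseudograph of a `K`-semi-concave function. -/
theorem stmt8 {d : ℕ} (K : ℝ) (hK : 0 ≤ K) (u : EuclideanSpace ℝ (Fin d) → ℝ)
    (hsc : ∀ x, ∃ p, SuperDiff K u x p)
    (a b : ℝ) (hab : a ≤ b)
    (η₁ η₂ : ℝ → EuclideanSpace ℝ (Fin d)) (L : NNReal)
    (hη₁ : LipschitzOnWith L η₁ (Set.Icc a b)) (hη₂ : LipschitzOnWith L η₂ (Set.Icc a b))
    (hclosed₁ : η₁ a = η₁ b) (hclosed₂ : η₂ a = η₂ b)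
    (hon : ∀ τ ∈ Set.Icc a b, SuperDiff K u (η₁ τ) (η₂ τ)) :
    ∫ τ in a..b, ⟪η₂ τ, derivWithin η₁ (Set.Icc a b) τ⟫ = 0 :=
  stmt8_general K u a b hab η₁ η₂ L hη₁ hη₂ hclosed₁ hon
end

section
/- Let s : ℝ^d ⊇ A → ℝ^d (A compact) be a continuous section with graph G = {(q, s(q)) : q ∈ A}. If the paratingent cone of G at every point contains no vector of the form (0, v) with v ≠ 0, then s is Lipschitz on A. -/
open Filter

/-- a continuous section over a compact set whose graph has no nonzero vertical
vector in any paratingent cone is Lipschitz. -/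
theorem stmt13 {d : ℕ} (A : Set (EuclideanSpace ℝ (Fin d))) (hA : IsCompact A)
    (s : EuclideanSpace ℝ (Fin d) → EuclideanSpace ℝ (Fin d)) (hs : ContinuousOn s A)
    (hvert : ∀ z ∈ (fun q => (q, s q)) '' A,
      ∀ v : EuclideanSpace ℝ (Fin d),
        ((0 : EuclideanSpace ℝ (Fin d)), v) ∈ Paratingent ((fun q => (q, s q)) '' A) z →
        v = 0) :
    ∃ L : NNReal, LipschitzOnWith L s A := by
  by_contra h
  push_neg at h
  have key : ∀ n : ℕ, ∃ a ∈ A, ∃ b ∈ A, (n : ℝ) * dist a b < dist (s a) (s b) := by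
    intro n
    have hn := h n
    rw [lipschitzOnWith_iff_dist_le_mul] at hn
    push_neg at hn
    obtain ⟨a, ha, b, hb, hab⟩ := hn
    exact ⟨a, ha, b, hb, by exact_mod_cast hab⟩
  choose a ha b hb hd using key
  set t : ℕ → ℝ := fun n => dist (s (a n)) (s (b n)) with ht
  have htpos : ∀ n, 0 < t n := fun n =>
    lt_of_le_of_lt (mul_nonneg (Nat.cast_nonneg n) dist_nonneg) (hd n)
  set u : ℕ → EuclideanSpace ℝ (Fin d) := fun n => (t n)⁻¹ • (s (a n) - s (b n)) with hu
  have hunorm : ∀ n, ‖u n‖ = 1 := by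
    intro n
    rw [hu]
    simp only [norm_smul, norm_inv, Real.norm_eq_abs, abs_of_pos (htpos n)]
    rw [← dist_eq_norm]
    exact inv_mul_cancel₀ (htpos n).ne'
  -- bound on t
  have himg : IsCompact (s '' A) := hA.image_of_continuousOn hs
  obtain ⟨M, hM⟩ := himg.isBounded.exists_norm_le
  have htle : ∀ n, t n ≤ 2 * M := by
    intro n
    calc t n ≤ ‖s (a n)‖ + ‖s (b n)‖ := dist_le_norm_add_norm _ _
    _ ≤ M + M := add_le_add (hM _ ⟨_, ha n, rfl⟩) (hM _ ⟨_, hb n, rfl⟩)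
    _ = 2 * M := by ring
  have hMpos : 0 < 2 * M := lt_of_lt_of_le (htpos 0) (htle 0)
  -- extract convergent subsequence
  have hScompact : IsCompact (A ×ˢ (A ×ˢ Metric.sphere (0 : EuclideanSpace ℝ (Fin d)) 1)) :=
    hA.prod (hA.prod (isCompact_sphere 0 1))
  have hmemS : ∀ n, (a n, b n, u n) ∈
      A ×ˢ (A ×ˢ Metric.sphere (0 : EuclideanSpace ℝ (Fin d)) 1) := by
    intro n
    refine ⟨ha n, hb n, ?_⟩
    simp [mem_sphere_iff_norm, hunorm n]
  obtain ⟨⟨q, q', v⟩, hlim, φ, hφ, hconv⟩ := hScompact.tendsto_subseq hmemS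
  obtain ⟨hqA, hq'A, hvS⟩ := hlim
  have hvnorm : ‖v‖ = 1 := by simpa [mem_sphere_iff_norm] using hvS
  have h1 : Tendsto (fun n => a (φ n)) atTop (nhds q) :=
    (continuous_fst.tendsto _).comp hconv
  have h2 : Tendsto (fun n => b (φ n)) atTop (nhds q') :=
    (continuous_fst.tendsto _).comp ((continuous_snd.tendsto _).comp hconv)
  have h3 : Tendsto (fun n => u (φ n)) atTop (nhds v) :=
    (continuous_snd.tendsto _).comp ((continuous_snd.tendsto _).comp hconv)
  -- dist (a (φ n)) (b (φ n)) → 0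
  have hdistbd : ∀ n : ℕ, 1 ≤ n → dist (a (φ n)) (b (φ n)) ≤ 2 * M / n := by
    intro n hn
    have hφn : (n : ℝ) ≤ (φ n : ℝ) := by exact_mod_cast hφ.id_le n
    have hnpos : (0 : ℝ) < n := by exact_mod_cast hn
    have hφnpos : (0 : ℝ) < (φ n : ℝ) := lt_of_lt_of_le hnpos hφn
    have h5 : dist (a (φ n)) (b (φ n)) ≤ 2 * M / (φ n) := by
      rw [le_div_iff₀ hφnpos]
      calc dist (a (φ n)) (b (φ n)) * (φ n) = (φ n : ℝ) * dist (a (φ n)) (b (φ n)) := by ring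
      _ ≤ t (φ n) := (hd (φ n)).le
      _ ≤ 2 * M := htle _
    exact h5.trans (div_le_div_of_nonneg_left hMpos.le hnpos hφn)
  have hdist0 : Tendsto (fun n => dist (a (φ n)) (b (φ n))) atTop (nhds 0) := by
    apply squeeze_zero' (Eventually.of_forall fun n => dist_nonneg)
      (eventually_atTop.2 ⟨1, hdistbd⟩)
    simpa using (tendsto_const_nhds (x := 2 * M)).div_atTop tendsto_natCast_atTop_atTop
  have hqq' : q = q' := by
    have : dist q q' = 0 := tendsto_nhds_unique (h1.dist h2) hdist0
    exact dist_eq_zero.mp this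
  subst hqq'
  -- s along subsequence
  have hsa : Tendsto (fun n => s (a (φ n))) atTop (nhds (s q)) :=
    (hs q hqA).tendsto.comp
      (tendsto_nhdsWithin_of_tendsto_nhds_of_eventually_within _ h1
        (Eventually.of_forall fun n => ha (φ n)))
  have hsb : Tendsto (fun n => s (b (φ n))) atTop (nhds (s q)) :=
    (hs q hqA).tendsto.comp
      (tendsto_nhdsWithin_of_tendsto_nhds_of_eventually_within _ h2
        (Eventually.of_forall fun n => hb (φ n)))
  -- first component of difference quotient tends to 0
  have hfst : Tendsto (fun n => (t (φ n))⁻¹ • (a (φ n) - b (φ n))) atTop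
      (nhds (0 : EuclideanSpace ℝ (Fin d))) := by
    rw [tendsto_zero_iff_norm_tendsto_zero]
    apply squeeze_zero' (Eventually.of_forall fun n => norm_nonneg _)
      (eventually_atTop.2 ⟨1, ?_⟩)
    · simpa using tendsto_one_div_atTop_nhds_zero_nat
    · intro n hn
      have hnpos : (0 : ℝ) < n := by exact_mod_cast hn
      have hφn : (n : ℝ) ≤ (φ n : ℝ) := by exact_mod_cast hφ.id_le n
      have hφnpos : (0 : ℝ) < (φ n : ℝ) := lt_of_lt_of_le hnpos hφn
      have : ‖(t (φ n))⁻¹ • (a (φ n) - b (φ n))‖ = dist (a (φ n)) (b (φ n)) / t (φ n) := by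
        rw [norm_smul, norm_inv, Real.norm_eq_abs, abs_of_pos (htpos _), ← dist_eq_norm,
          div_eq_inv_mul]
      rw [this, div_le_div_iff₀ (htpos _) hnpos]
      calc dist (a (φ n)) (b (φ n)) * n ≤ dist (a (φ n)) (b (φ n)) * (φ n) :=
        mul_le_mul_of_nonneg_left hφn dist_nonneg
      _ = (φ n : ℝ) * dist (a (φ n)) (b (φ n)) := by ring
      _ ≤ t (φ n) := (hd (φ n)).le
      _ = 1 * t (φ n) := (one_mul _).symm
  -- build paratingent membership
  have hz : ((q, s q) : EuclideanSpace ℝ (Fin d) × EuclideanSpace ℝ (Fin d)) ∈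
      (fun q => (q, s q)) '' A := ⟨q, hqA, rfl⟩
  have hpara : ((0 : EuclideanSpace ℝ (Fin d)), v) ∈
      Paratingent ((fun q => (q, s q)) '' A) (q, s q) := by
    refine ⟨fun n => t (φ n), fun n => (a (φ n), s (a (φ n))),
      fun n => (b (φ n), s (b (φ n))), fun n => htpos _,
      fun n => ⟨_, ha (φ n), rfl⟩, fun n => ⟨_, hb (φ n), rfl⟩,
      h1.prodMk_nhds hsa, h2.prodMk_nhds hsb, ?_⟩
    have : (fun n => (t (φ n))⁻¹ • ((a (φ n), s (a (φ n))) - (b (φ n), s (b (φ n))))) =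
        fun n => ((t (φ n))⁻¹ • (a (φ n) - b (φ n)),
          (t (φ n))⁻¹ • (s (a (φ n)) - s (b (φ n)))) := rfl
    rw [this]
    exact hfst.prodMk_nhds h3
  have := hvert _ hz v hpara
  rw [this, norm_zero] at hvnorm
  exact zero_ne_one hvnorm
end
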